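/- arXiv:2010.07508 — 4 statements merged into one kernel-verified Lean document; each statement's English description precedes it below -/
import Mathlib

section
/- Under the setup with general d' ≥ 1: suppose for each ε ∈ (0,1] a C³ solution (r_ε, x_ε) of the XLMD system on [0,t_f] is given, satisfying the a priori bounds with constant C₀ (independent of ε) and the compatible initial condition with constant M. Then there exists a constant C > 0, depending only on A, b, F, r_⋆, t_f, C₀, M (and not on ε), such that for all ε ∈ (0,1] and all t ∈ [0,t_f]: |r_ε(t) − r_⋆(t)| ≤ C·ε^{1/2} and |ṙ_ε(t) − ṙ_⋆(t)| ≤ C·ε^{1/2}. -/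
/- XLMD error analysis, general latent dimension: O(√ε) error for the atomic
positions and momenta, under compatible initial conditions. -/

open scoped RealInnerProductSpace
open Set

noncomputable section

attribute [local instance] Matrix.normedAddCommGroup Matrix.normedSpace

/-- The gradient in `r` of `Q(r,x) = ½ xᵀA(r)x − b(r)ᵀx`; its `k`-th component is
`½ xᵀ(∂A/∂r_k)(r)x − (∂b/∂r_k)(r)ᵀx`. -/
noncomputable def gradQ {d n : ℕ}
    (A : EuclideanSpace ℝ (Fin d) → Matrix (Fin n) (Fin n) ℝ)
    (b : EuclideanSpace ℝ (Fin d) → EuclideanSpace ℝ (Fin n))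
    (r : EuclideanSpace ℝ (Fin d)) (x : EuclideanSpace ℝ (Fin n)) :
    EuclideanSpace ℝ (Fin d) :=
  (EuclideanSpace.equiv (Fin d) ℝ).symm fun k =>
    (1/2) * ⟪x, (Matrix.toEuclideanLin (fderiv ℝ A r (EuclideanSpace.single k 1))) x⟫
      - ⟪fderiv ℝ b r (EuclideanSpace.single k 1), x⟫


/-! The deviation `y = xε - A(rε)⁻¹ b(rε)` of the latent variable from its adiabatic value
solves the stiff linear oscillator `ε y'' + A(rε) y = -ε (A⁻¹ b ∘ rε)''` with `y 0 = 0` and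
`y' 0 = O(1)`. Its energy `ε ‖y'‖² / 2 + ⟪y, A y⟫ / 2` starts at `O(ε)`, and since the forcing
only enters at order `ε`, Grönwall keeps it `O(ε)` on `[0, t_f]`; coercivity of `A` then gives
`‖y‖ = O(√ε)`. The forces are Lipschitz on a compact set containing both trajectories, so
`r̈ε - r̈⋆ = O(‖rε - r⋆‖ + ‖y‖)`, and a second Grönwall argument on `(rε - r⋆, ṙε - ṙ⋆)` with zero
initial data gives the `O(√ε)` bound. -/

open Matrix Metric


section Gronwall

variable {E : Type*} [NormedAddCommGroup E] [NormedSpace ℝ E]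

theorem gronwallBound_le_exp {δ K η t T : ℝ} (hδ : 0 ≤ δ) (hη : 0 ≤ η) (hK : 0 < K)
    (ht : t ≤ T) : gronwallBound δ K η t ≤ (δ + η / K) * Real.exp (K * T) := by
  refine (gronwallBound_mono hδ hη hK.le ht).trans ?_
  rw [gronwallBound_of_K_ne_0 hK.ne']
  have : 0 ≤ η / K := by positivity
  linarith

theorem norm_le_of_norm_deriv_le_mul_add {f f' : ℝ → E} {δ K η T : ℝ} (hK : 0 < K)
    (hη : 0 ≤ η) (hf : ∀ t, HasDerivAt f (f' t) t) (h0 : ‖f 0‖ ≤ δ)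
    (bound : ∀ t ∈ Icc 0 T, ‖f' t‖ ≤ K * ‖f t‖ + η) :
    ∀ t ∈ Icc 0 T, ‖f t‖ ≤ (δ + η / K) * Real.exp (K * T) := by
  intro t ht
  have h := norm_le_gronwallBound_of_norm_deriv_right_le
    (continuous_iff_continuousAt.2 fun t => (hf t).continuousAt).continuousOn
    (fun t _ => (hf t).hasDerivWithinAt) h0 (fun t ht => bound t (Ico_subset_Icc_self ht)) t ht
  rw [sub_zero] at h
  exact h.trans (gronwallBound_le_exp ((norm_nonneg _).trans h0) hη hK ht.2)

theorem norm_le_of_norm_deriv_deriv_le {z z' z'' : ℝ → E} {L η T : ℝ} (hL : 0 ≤ L)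
    (hη : 0 ≤ η) (hz : ∀ t, HasDerivAt z (z' t) t) (hz' : ∀ t, HasDerivAt z' (z'' t) t)
    (h0 : z 0 = 0) (h0' : z' 0 = 0) (bound : ∀ t ∈ Icc 0 T, ‖z'' t‖ ≤ L * ‖z t‖ + η) :
    ∀ t ∈ Icc 0 T, ‖z t‖ ≤ η / (1 + L) * Real.exp ((1 + L) * T) ∧
      ‖z' t‖ ≤ η / (1 + L) * Real.exp ((1 + L) * T) := by
  have phase := norm_le_of_norm_deriv_le_mul_add (f := fun t => (z t, z' t))
    (f' := fun t => (z' t, z'' t)) (δ := 0) (K := 1 + L) (by positivity) hη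
    (fun t => (hz t).prodMk (hz' t)) (by simp [h0, h0']) fun t ht => by
      have hfst := norm_fst_le (z t, z' t)
      have hsnd := norm_snd_le (z t, z' t)
      have hz := norm_nonneg (z t)
      dsimp only at hfst hsnd
      exact max_le (by nlinarith) ((bound t ht).trans (by nlinarith))
  intro t ht
  rw [← zero_add (η / (1 + L))]
  exact ⟨(norm_fst_le _).trans (phase t ht), (norm_snd_le _).trans (phase t ht)⟩

end Gronwall

section Oscillator

variable {E : Type*} [NormedAddCommGroup E] [InnerProductSpace ℝ E]

def oscillatorEnergy (ε : ℝ) (G : ℝ → E →L[ℝ] E) (y y' : ℝ → E) (t : ℝ) : ℝ :=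
  ε / 2 * ‖y' t‖ ^ 2 + 1 / 2 * ⟪y t, G t (y t)⟫

variable {ε c K W M T : ℝ} {G G' : ℝ → E →L[ℝ] E} {y y' y'' w : ℝ → E}

theorem le_oscillatorEnergy (hcoer : ∀ t v, c * ‖v‖ ^ 2 ≤ ⟪v, G t v⟫) (t : ℝ) :
    ε / 2 * ‖y' t‖ ^ 2 + c / 2 * ‖y t‖ ^ 2 ≤ oscillatorEnergy ε G y y' t := by
  unfold oscillatorEnergy
  linarith [hcoer t (y t)]

theorem hasDerivAt_oscillatorEnergy {t : ℝ} (hG : HasDerivAt G (G' t) t)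
    (hsymm : ∀ u v, ⟪G t u, v⟫ = ⟪u, G t v⟫) (hy : HasDerivAt y (y' t) t)
    (hy' : HasDerivAt y' (y'' t) t) :
    HasDerivAt (oscillatorEnergy ε G y y')
      (⟪ε • y'' t + G t (y t), y' t⟫ + 1 / 2 * ⟪y t, G' t (y t)⟫) t := by
  have h := (hy'.norm_sq.const_mul (ε / 2)).add
    ((hy.inner ℝ (hG.clm_apply hy)).const_mul (1 / 2))
  refine h.congr_deriv ?_
  rw [inner_add_left, inner_add_right, real_inner_smul_left, ← hsymm,
    real_inner_comm (y' t) (y'' t), real_inner_comm (y' t)]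
  ring

theorem abs_deriv_oscillatorEnergy_le (hε : 0 < ε) (hc : 0 < c)
    (hcoer : ∀ t v, c * ‖v‖ ^ 2 ≤ ⟪v, G t v⟫) {t : ℝ}
    (hode : ε • y'' t + G t (y t) = -(ε • w t)) (hG' : ‖G' t‖ ≤ K) (hw : ‖w t‖ ≤ W) :
    |⟪ε • y'' t + G t (y t), y' t⟫ + 1 / 2 * ⟪y t, G' t (y t)⟫| ≤
      (1 + K / c) * oscillatorEnergy ε G y y' t + ε * W ^ 2 / 2 := by
  have hK : 0 ≤ K := (norm_nonneg _).trans hG'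
  have hlow := le_oscillatorEnergy (ε := ε) (y := y) (y' := y') hcoer t
  have hwy : |⟪w t, y' t⟫| ≤ W * ‖y' t‖ :=
    (abs_real_inner_le_norm _ _).trans (by gcongr)
  have hyG'y : |⟪y t, G' t (y t)⟫| ≤ K * ‖y t‖ ^ 2 := by
    refine (abs_real_inner_le_norm _ _).trans ?_
    calc ‖y t‖ * ‖G' t (y t)‖ ≤ ‖y t‖ * (K * ‖y t‖) := by
          gcongr; exact (G' t).le_of_opNorm_le hG' _
      _ = K * ‖y t‖ ^ 2 := by ring
  -- the forcing is absorbed into the kinetic part of the energy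
  have hamgm : W * ‖y' t‖ ≤ W ^ 2 / 2 + ‖y' t‖ ^ 2 / 2 := by nlinarith [sq_nonneg (W - ‖y' t‖)]
  have hKc : K * ‖y t‖ ^ 2 = 2 * (K / c) * (c / 2 * ‖y t‖ ^ 2) := by field_simp
  have hkin : ε / 2 * ‖y' t‖ ^ 2 ≤ oscillatorEnergy ε G y y' t := by nlinarith
  have hpot : K / c * (c / 2 * ‖y t‖ ^ 2) ≤ K / c * oscillatorEnergy ε G y y' t := by
    gcongr; nlinarith
  rw [hode, inner_neg_left, real_inner_smul_left]
  calc |-(ε * ⟪w t, y' t⟫) + 1 / 2 * ⟪y t, G' t (y t)⟫|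
      ≤ ε * (W * ‖y' t‖) + 1 / 2 * (K * ‖y t‖ ^ 2) := by
        refine (abs_add_le _ _).trans ?_
        rw [abs_neg, abs_mul, abs_mul, abs_of_pos hε, abs_of_pos (by norm_num : (0 : ℝ) < 1 / 2)]
        gcongr
    _ ≤ ε * W ^ 2 / 2 + (ε / 2 * ‖y' t‖ ^ 2 + K / c * (c / 2 * ‖y t‖ ^ 2)) := by
        rw [hKc]; nlinarith
    _ ≤ (1 + K / c) * oscillatorEnergy ε G y y' t + ε * W ^ 2 / 2 := by linarith

theorem oscillatorEnergy_le (hε : 0 < ε) (hc : 0 < c)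
    (hG : ∀ t, HasDerivAt G (G' t) t) (hsymm : ∀ t u v, ⟪G t u, v⟫ = ⟪u, G t v⟫)
    (hcoer : ∀ t v, c * ‖v‖ ^ 2 ≤ ⟪v, G t v⟫)
    (hy : ∀ t, HasDerivAt y (y' t) t) (hy' : ∀ t, HasDerivAt y' (y'' t) t)
    (hode : ∀ t ∈ Icc 0 T, ε • y'' t + G t (y t) = -(ε • w t))
    (hG' : ∀ t ∈ Icc 0 T, ‖G' t‖ ≤ K) (hw : ∀ t ∈ Icc 0 T, ‖w t‖ ≤ W)
    (hy0 : y 0 = 0) (hy'0 : ‖y' 0‖ ≤ M) :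
    ∀ t ∈ Icc 0 T, oscillatorEnergy ε G y y' t ≤
      ε * ((M ^ 2 + W ^ 2 / (1 + K / c)) * Real.exp ((1 + K / c) * T) / 2) := by
  intro t ht
  have hK : 0 ≤ K := (norm_nonneg _).trans (hG' 0 ⟨le_rfl, ht.1.trans ht.2⟩)
  have hnonneg : ∀ s, 0 ≤ oscillatorEnergy ε G y y' s := fun s =>
    (by positivity : 0 ≤ ε / 2 * ‖y' s‖ ^ 2 + c / 2 * ‖y s‖ ^ 2).trans
      (le_oscillatorEnergy hcoer s)
  have h0 : ‖oscillatorEnergy ε G y y' 0‖ ≤ ε * M ^ 2 / 2 := by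
    rw [Real.norm_eq_abs, abs_of_nonneg (hnonneg 0), oscillatorEnergy, hy0, inner_zero_left,
      mul_zero, add_zero]
    have : ‖y' 0‖ ^ 2 ≤ M ^ 2 := pow_le_pow_left₀ (norm_nonneg _) hy'0 2
    nlinarith
  have hbound : ∀ s ∈ Icc 0 T, ‖⟪ε • y'' s + G s (y s), y' s⟫ + 1 / 2 * ⟪y s, G' s (y s)⟫‖ ≤
      (1 + K / c) * ‖oscillatorEnergy ε G y y' s‖ + ε * W ^ 2 / 2 := fun s hs => by
    rw [Real.norm_eq_abs, Real.norm_eq_abs, abs_of_nonneg (hnonneg s)]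
    exact abs_deriv_oscillatorEnergy_le hε hc hcoer (hode s hs) (hG' s hs) (hw s hs)
  calc oscillatorEnergy ε G y y' t ≤ ‖oscillatorEnergy ε G y y' t‖ := Real.le_norm_self _
    _ ≤ (ε * M ^ 2 / 2 + ε * W ^ 2 / 2 / (1 + K / c)) * Real.exp ((1 + K / c) * T) :=
        norm_le_of_norm_deriv_le_mul_add (by positivity) (by positivity)
          (fun s => hasDerivAt_oscillatorEnergy (hG s) (hsymm s) (hy s) (hy' s)) h0 hbound t ht
    _ = ε * ((M ^ 2 + W ^ 2 / (1 + K / c)) * Real.exp ((1 + K / c) * T) / 2) := by ring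

theorem norm_le_of_oscillatorEnergy_le (hc : 0 < c) (hε : 0 ≤ ε)
    (hcoer : ∀ t v, c * ‖v‖ ^ 2 ≤ ⟪v, G t v⟫) {Λ t : ℝ}
    (h : oscillatorEnergy ε G y y' t ≤ ε * (Λ / 2)) : ‖y t‖ ≤ √(Λ / c) * √ε := by
  have hpot : c / 2 * ‖y t‖ ^ 2 ≤ ε * (Λ / 2) := by
    nlinarith [le_oscillatorEnergy (ε := ε) (y := y) (y' := y') hcoer t, sq_nonneg ‖y' t‖]
  rw [← Real.sqrt_mul' _ hε, ← Real.sqrt_sq (norm_nonneg (y t))]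
  refine Real.sqrt_le_sqrt ?_
  rw [div_mul_eq_mul_div, le_div_iff₀ hc]
  linarith

end Oscillator

theorem ContDiff.hasDerivAt_deriv {E : Type*} [NormedAddCommGroup E] [NormedSpace ℝ E]
    {f : ℝ → E} (hf : ContDiff ℝ 2 f) (t : ℝ) : HasDerivAt (deriv f) (deriv (deriv f) t) t :=
  ((contDiff_succ_iff_deriv (n := 1)).1 hf).2.2.differentiable one_ne_zero t |>.hasDerivAt

theorem hasDerivAt_sub_comp_and_deriv {X Y : Type*} [NormedAddCommGroup X] [NormedSpace ℝ X]
    [NormedAddCommGroup Y] [NormedSpace ℝ Y] {φ : X → Y} (hφ : ContDiff ℝ 2 φ) {γ : ℝ → X}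
    {x : ℝ → Y} (hγ : ContDiff ℝ 2 γ) (hx : ContDiff ℝ 2 x) (t : ℝ) :
    HasDerivAt (fun s => x s - φ (γ s)) (deriv x t - fderiv ℝ φ (γ t) (deriv γ t)) t ∧
      HasDerivAt (fun s => deriv x s - fderiv ℝ φ (γ s) (deriv γ s))
        (deriv (deriv x) t - (fderiv ℝ (fderiv ℝ φ) (γ t) (deriv γ t) (deriv γ t) +
          fderiv ℝ φ (γ t) (deriv (deriv γ) t))) t := by
  have hγ' := (hγ.differentiable two_ne_zero t).hasDerivAt
  refine ⟨(hx.differentiable two_ne_zero t).hasDerivAt.sub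
    ((hφ.differentiable two_ne_zero (γ t)).hasFDerivAt.comp_hasDerivAt t hγ'),
    (hx.hasDerivAt_deriv t).sub ?_⟩
  exact ((hφ.fderiv_right (m := 1) (by norm_num)).differentiable one_ne_zero (γ t)).hasFDerivAt
    |>.comp_hasDerivAt t hγ' |>.clm_apply (hγ.hasDerivAt_deriv t)

theorem norm_fderiv_fderiv_apply_add_le {X Y : Type*} [NormedAddCommGroup X]
    [NormedSpace ℝ X] [NormedAddCommGroup Y] [NormedSpace ℝ Y] {φ : X → Y} {r v a : X}
    {B₁ B₂ C : ℝ} (h₁ : ‖fderiv ℝ φ r‖ ≤ B₁) (h₂ : ‖fderiv ℝ (fderiv ℝ φ) r‖ ≤ B₂)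
    (hv : ‖v‖ ≤ C) (ha : ‖a‖ ≤ C) :
    ‖fderiv ℝ (fderiv ℝ φ) r v v + fderiv ℝ φ r a‖ ≤ B₂ * C ^ 2 + B₁ * C := by
  have hB₁ : 0 ≤ B₁ := (norm_nonneg _).trans h₁
  have hB₂ : 0 ≤ B₂ := le_trans (by positivity) h₂
  have hC : 0 ≤ C := (norm_nonneg _).trans hv
  refine (norm_add_le _ _).trans (add_le_add ?_ ?_)
  · refine ((fderiv ℝ (fderiv ℝ φ) r).le_opNorm₂ _ _).trans ?_
    rw [pow_two, ← mul_assoc]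
    gcongr
  · exact ((fderiv ℝ φ r).le_opNorm _).trans (by gcongr)

section Matrix

variable {ι : Type*} [Fintype ι] [DecidableEq ι]

theorem Matrix.isUnit_of_coercive {M : Matrix ι ι ℝ} {c : ℝ} (hc : 0 < c)
    (h : ∀ v : EuclideanSpace ℝ ι, c * ‖v‖ ^ 2 ≤ ⟪v, Matrix.toEuclideanLin M v⟫) :
    IsUnit M := by
  rw [← Matrix.mulVec_injective_iff_isUnit]
  refine (injective_iff_map_eq_zero M.mulVecLin).2 fun v hv => ?_
  have hcv := h (WithLp.toLp 2 v)
  have hzero : Matrix.toEuclideanLin M (WithLp.toLp 2 v) = 0 := congrArg (WithLp.toLp 2) hv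
  rw [hzero, inner_zero_right] at hcv
  have : ‖WithLp.toLp 2 v‖ ^ 2 ≤ 0 := le_of_mul_le_mul_left (by simpa using hcv) hc
  simpa using this

theorem Matrix.toEuclideanCLM_nonsing_inv {𝕜 : Type*} [RCLike 𝕜] {M : Matrix ι ι 𝕜}
    (hM : IsUnit M) :
    toEuclideanCLM (𝕜 := 𝕜) M⁻¹ = Ring.inverse (toEuclideanCLM (𝕜 := 𝕜) M) := by
  rw [eq_comm, ← mul_one (Ring.inverse _), Ring.inverse_mul_eq_iff_eq_mul _ _ _ (hM.map _),
    ← map_mul, M.mul_nonsing_inv (M.isUnit_iff_isUnit_det.1 hM), map_one]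

theorem Matrix.inner_toEuclideanCLM_of_isSymm {M : Matrix ι ι ℝ} (hM : M.IsSymm)
    (u v : EuclideanSpace ℝ ι) :
    ⟪toEuclideanCLM (𝕜 := ℝ) M u, v⟫ = ⟪u, toEuclideanCLM (𝕜 := ℝ) M v⟫ :=
  Matrix.isSymmetric_toEuclideanLin_iff.2
    (by rwa [Matrix.IsHermitian, Matrix.conjTranspose_eq_transpose_of_trivial]) u v

theorem ContDiff.toEuclideanCLM {X : Type*} [NormedAddCommGroup X] [NormedSpace ℝ X]
    {k : WithTop ℕ∞} {A : X → Matrix ι ι ℝ} (hA : ContDiff ℝ k A) :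
    ContDiff ℝ k fun r => toEuclideanCLM (𝕜 := ℝ) (A r) :=
  (LinearMap.toContinuousLinearMap
    (Matrix.toEuclideanCLM (n := ι) (𝕜 := ℝ)).toAlgEquiv.toLinearMap).contDiff.comp hA

end Matrix

section Latent

variable {X : Type*} {ι : Type*} [Fintype ι] [DecidableEq ι] {A : X → Matrix ι ι ℝ}
  {b : X → EuclideanSpace ℝ ι}

/-- The paper's `x⋆(r)`, the minimiser of `Q(r, ·)`. -/
def latentMinimizer (A : X → Matrix ι ι ℝ) (b : X → EuclideanSpace ℝ ι) (r : X) :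
    EuclideanSpace ℝ ι :=
  Matrix.toEuclideanLin (A r)⁻¹ (b r)

theorem toEuclideanCLM_latentMinimizer {r : X} (hA : IsUnit (A r)) :
    toEuclideanCLM (𝕜 := ℝ) (A r) (latentMinimizer A b r) = b r := by
  change (toEuclideanCLM (𝕜 := ℝ) (A r) * toEuclideanCLM (𝕜 := ℝ) (A r)⁻¹) (b r) = b r
  rw [← map_mul, (A r).mul_nonsing_inv ((A r).isUnit_iff_isUnit_det.1 hA), map_one]
  rfl

theorem smul_sub_add_toEuclideanCLM_sub_latentMinimizer {r : X} (hA : IsUnit (A r))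
    {ε : ℝ} {a x : EuclideanSpace ℝ ι} (h : ε • a = b r - toEuclideanLin (A r) x)
    (w : EuclideanSpace ℝ ι) :
    ε • (a - w) + toEuclideanCLM (𝕜 := ℝ) (A r) (x - latentMinimizer A b r) = -(ε • w) := by
  rw [smul_sub, h, map_sub, toEuclideanCLM_latentMinimizer hA]
  change _ + (toEuclideanLin (A r) x - _) = _
  abel

theorem contDiff_latentMinimizer [NormedAddCommGroup X] [NormedSpace ℝ X] {k : WithTop ℕ∞}
    (hA : ContDiff ℝ k A) (hb : ContDiff ℝ k b) (hunit : ∀ r, IsUnit (A r)) :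
    ContDiff ℝ k (latentMinimizer A b) := by
  have hinv : latentMinimizer A b =
      fun r => Ring.inverse (toEuclideanCLM (𝕜 := ℝ) (A r)) (b r) := by
    ext1 r
    rw [← Matrix.toEuclideanCLM_nonsing_inv (hunit r)]
    rfl
  rw [hinv, contDiff_iff_contDiffAt]
  intro r
  obtain ⟨u, hu⟩ := (hunit r).map (toEuclideanCLM (n := ι) (𝕜 := ℝ))
  have hring : ContDiffAt ℝ k Ring.inverse (toEuclideanCLM (𝕜 := ℝ) (A r)) :=
    hu ▸ contDiffAt_ringInverse ℝ u
  exact (hring.comp r hA.toEuclideanCLM.contDiffAt).clm_apply hb.contDiffAt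

end Latent

theorem contDiff_gradQ {d n : ℕ} {A : EuclideanSpace ℝ (Fin d) → Matrix (Fin n) (Fin n) ℝ}
    {b : EuclideanSpace ℝ (Fin d) → EuclideanSpace ℝ (Fin n)} {k : WithTop ℕ∞}
    (hA : ContDiff ℝ (k + 1) A) (hb : ContDiff ℝ (k + 1) b) :
    ContDiff ℝ k fun p : EuclideanSpace ℝ (Fin d) × EuclideanSpace ℝ (Fin n) =>
      gradQ A b p.1 p.2 := by
  refine (EuclideanSpace.equiv (Fin d) ℝ).symm.contDiff.comp (contDiff_pi.2 fun i => ?_)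
  let P := EuclideanSpace ℝ (Fin d) × EuclideanSpace ℝ (Fin n)
  have hA' : ContDiff ℝ k fun p : P => fderiv ℝ A p.1 (EuclideanSpace.single i 1) :=
    ((hA.fderiv_right (m := k) le_rfl).comp contDiff_fst).clm_apply contDiff_const
  have hb' : ContDiff ℝ k fun p : P => fderiv ℝ b p.1 (EuclideanSpace.single i 1) :=
    ((hb.fderiv_right (m := k) le_rfl).comp contDiff_fst).clm_apply contDiff_const
  exact (contDiff_const.mul (contDiff_snd.inner ℝ
    (hA'.toEuclideanCLM.clm_apply contDiff_snd))).sub (hb'.inner ℝ contDiff_snd)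

section Slaved

variable {X Y : Type*} [NormedAddCommGroup X] [NormedSpace ℝ X] [NormedAddCommGroup Y]

theorem norm_sub_le_of_slaved_perturbation {f : X × Y → X} {φ : X → Y} {s : Set X}
    {s' : Set Y} {Lf Lφ : NNReal} (hf : LipschitzOnWith Lf f (s ×ˢ s'))
    (hφ : LipschitzOnWith Lφ φ s) (hφs : MapsTo φ s s') {u u' u'' v v' v'' : ℝ → X}
    {x : ℝ → Y} {δ T : ℝ} (hu : ∀ t, HasDerivAt u (u' t) t)
    (hu' : ∀ t, HasDerivAt u' (u'' t) t) (hv : ∀ t, HasDerivAt v (v' t) t)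
    (hv' : ∀ t, HasDerivAt v' (v'' t) t) (hu'' : ∀ t ∈ Icc 0 T, u'' t = f (u t, x t))
    (hv'' : ∀ t ∈ Icc 0 T, v'' t = f (v t, φ (v t))) (hus : ∀ t ∈ Icc 0 T, u t ∈ s)
    (hvs : ∀ t ∈ Icc 0 T, v t ∈ s) (hxs : ∀ t ∈ Icc 0 T, x t ∈ s')
    (hx : ∀ t ∈ Icc 0 T, ‖x t - φ (u t)‖ ≤ δ) (h0 : u 0 = v 0) (h0' : u' 0 = v' 0) :
    ∀ t ∈ Icc 0 T,
      ‖u t - v t‖ ≤ Lf * δ / (1 + Lf * (1 + Lφ)) * Real.exp ((1 + Lf * (1 + Lφ)) * T) ∧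
      ‖u' t - v' t‖ ≤ Lf * δ / (1 + Lf * (1 + Lφ)) * Real.exp ((1 + Lf * (1 + Lφ)) * T) := by
  intro t ht
  have hδ : 0 ≤ δ := (norm_nonneg _).trans (hx 0 ⟨le_rfl, ht.1.trans ht.2⟩)
  refine norm_le_of_norm_deriv_deriv_le (by positivity) (by positivity)
    (fun t => (hu t).sub (hv t)) (fun t => (hu' t).sub (hv' t)) (sub_eq_zero.2 h0)
    (sub_eq_zero.2 h0') (fun t ht => ?_) t ht
  have hxφ : ‖x t - φ (v t)‖ ≤ δ + Lφ * ‖u t - v t‖ :=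
    calc ‖x t - φ (v t)‖ = ‖(x t - φ (u t)) + (φ (u t) - φ (v t))‖ := by
          rw [sub_add_sub_cancel]
      _ ≤ δ + Lφ * ‖u t - v t‖ := (norm_add_le _ _).trans <| add_le_add (hx t ht)
          (lipschitzOnWith_iff_norm_sub_le.1 hφ (hus t ht) (hvs t ht))
  rw [hu'' t ht, hv'' t ht]
  calc ‖f (u t, x t) - f (v t, φ (v t))‖ ≤ Lf * ‖(u t, x t) - (v t, φ (v t))‖ :=
        lipschitzOnWith_iff_norm_sub_le.1 hf ⟨hus t ht, hxs t ht⟩ ⟨hvs t ht, hφs (hvs t ht)⟩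
    _ ≤ Lf * (‖u t - v t‖ + (δ + Lφ * ‖u t - v t‖)) := by
        gcongr
        rw [Prod.mk_sub_mk, Prod.norm_mk]
        exact (max_le_add_of_nonneg (norm_nonneg _) (norm_nonneg _)).trans (by gcongr)
    _ = Lf * (1 + Lφ) * ‖u t - v t‖ + Lf * δ := by ring

theorem exists_norm_sub_le_of_slaved [ProperSpace X] [NormedSpace ℝ Y] [ProperSpace Y]
    {f : X × Y → X} {φ : X → Y} (hf : ContDiff ℝ 1 f) (hφ : ContDiff ℝ 1 φ) {v : ℝ → X} {C₀ T : ℝ}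
    (hv : ContDiff ℝ 2 v) (hv'' : ∀ t ∈ Icc 0 T, deriv (deriv v) t = f (v t, φ (v t)))
    (hvbd : ∀ t ∈ Icc 0 T, ‖v t‖ ≤ C₀) :
    ∃ K, ∀ (δ : ℝ) (u : ℝ → X) (x : ℝ → Y), ContDiff ℝ 2 u →
      (∀ t ∈ Icc 0 T, deriv (deriv u) t = f (u t, x t)) →
      (∀ t ∈ Icc 0 T, ‖u t‖ ≤ C₀ ∧ ‖x t‖ ≤ C₀) → (∀ t ∈ Icc 0 T, ‖x t - φ (u t)‖ ≤ δ) →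
      u 0 = v 0 → deriv u 0 = deriv v 0 →
      ∀ t ∈ Icc 0 T, ‖u t - v t‖ ≤ K * δ ∧ ‖deriv u t - deriv v t‖ ≤ K * δ := by
  obtain ⟨R, hR⟩ := (isCompact_closedBall (0 : X) C₀).exists_bound_of_continuousOn
    hφ.continuous.continuousOn
  have hmaps : MapsTo φ (closedBall 0 C₀) (closedBall 0 (max C₀ R)) := fun r hr =>
    mem_closedBall_zero_iff.2 ((hR r hr).trans (le_max_right _ _))
  obtain ⟨Lf, hLf⟩ := hf.contDiffOn.exists_lipschitzOnWith one_ne_zero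
    ((convex_closedBall 0 C₀).prod (convex_closedBall 0 (max C₀ R)))
    ((isCompact_closedBall _ _).prod (isCompact_closedBall _ _))
  obtain ⟨Lφ, hLφ⟩ := hφ.contDiffOn.exists_lipschitzOnWith one_ne_zero (convex_closedBall 0 C₀)
    (isCompact_closedBall _ _)
  refine ⟨Lf / (1 + Lf * (1 + Lφ)) * Real.exp ((1 + Lf * (1 + Lφ)) * T),
    fun δ u x hu hu'' hbd hx h0 h0' t ht => ?_⟩
  have hcmp := norm_sub_le_of_slaved_perturbation hLf hLφ hmaps
    (fun t => (hu.differentiable two_ne_zero t).hasDerivAt) hu.hasDerivAt_deriv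
    (fun t => (hv.differentiable two_ne_zero t).hasDerivAt) hv.hasDerivAt_deriv hu'' hv''
    (fun t ht => mem_closedBall_zero_iff.2 (hbd t ht).1)
    (fun t ht => mem_closedBall_zero_iff.2 (hvbd t ht))
    (fun t ht => mem_closedBall_zero_iff.2 ((hbd t ht).2.trans (le_max_left _ _))) hx h0 h0' t ht
  rwa [mul_div_right_comm, mul_right_comm _ δ] at hcmp

end Slaved

section XLMD

variable {X : Type*} [NormedAddCommGroup X] [NormedSpace ℝ X] {ι : Type*} [Fintype ι]
  [DecidableEq ι] {A : X → Matrix ι ι ℝ} {b : X → EuclideanSpace ℝ ι} {c : ℝ}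

theorem norm_sub_latentMinimizer_le (hA : ContDiff ℝ 2 A) (hb : ContDiff ℝ 2 b)
    (hAsymm : ∀ r, (A r).IsSymm) (hc : 0 < c)
    (hApos : ∀ r v, c * ‖v‖ ^ 2 ≤ ⟪v, toEuclideanLin (A r) v⟫) {B C₀ M tf ε : ℝ}
    (hB : ∀ r ∈ closedBall (0 : X) C₀, ‖fderiv ℝ (latentMinimizer A b) r‖ ≤ B ∧
      ‖fderiv ℝ (fderiv ℝ (latentMinimizer A b)) r‖ ≤ B ∧
      ‖fderiv ℝ (fun r => toEuclideanCLM (𝕜 := ℝ) (A r)) r‖ ≤ B)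
    (hε : 0 < ε) {re : ℝ → X} {xe : ℝ → EuclideanSpace ℝ ι} (hre : ContDiff ℝ 2 re)
    (hxe : ContDiff ℝ 2 xe)
    (hode : ∀ t ∈ Icc 0 tf, ε • deriv (deriv xe) t = b (re t) - toEuclideanLin (A (re t)) (xe t))
    (hbd : ∀ t ∈ Icc 0 tf, ‖re t‖ ≤ C₀ ∧ ‖deriv re t‖ ≤ C₀ ∧ ‖deriv (deriv re) t‖ ≤ C₀)
    (hx0 : xe 0 = latentMinimizer A b (re 0)) (hdx0 : ‖deriv xe 0‖ ≤ M) :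
    ∀ t ∈ Icc 0 tf, ‖xe t - latentMinimizer A b (re t)‖ ≤
      √(((M + B * C₀) ^ 2 + (B * C₀ ^ 2 + B * C₀) ^ 2 / (1 + B * C₀ / c)) *
        Real.exp ((1 + B * C₀ / c) * tf) / c) * √ε := by
  intro t ht
  have hunit : ∀ r, IsUnit (A r) := fun r => Matrix.isUnit_of_coercive hc (hApos r)
  set φ := latentMinimizer A b
  have hφ : ContDiff ℝ 2 φ := contDiff_latentMinimizer hA hb hunit
  set T := fun r => toEuclideanCLM (𝕜 := ℝ) (A r)
  set w : ℝ → EuclideanSpace ℝ ι := fun s =>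
    fderiv ℝ (fderiv ℝ φ) (re s) (deriv re s) (deriv re s) + fderiv ℝ φ (re s) (deriv (deriv re) s)
  have hdev := hasDerivAt_sub_comp_and_deriv hφ hre hxe
  have hre1 : ∀ s, HasDerivAt re (deriv re s) s := fun s =>
    (hre.differentiable two_ne_zero s).hasDerivAt
  have hG : ∀ s, HasDerivAt (fun s => T (re s)) (fderiv ℝ T (re s) (deriv re s)) s := fun s =>
    (hA.toEuclideanCLM.differentiable two_ne_zero (re s)).hasFDerivAt.comp_hasDerivAt s (hre1 s)
  have hyode : ∀ s ∈ Icc 0 tf,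
      ε • (deriv (deriv xe) s - w s) + T (re s) (xe s - φ (re s)) = -(ε • w s) :=
    fun s hs => smul_sub_add_toEuclideanCLM_sub_latentMinimizer (hunit _) (hode s hs) _
  have hbd' : ∀ s ∈ Icc 0 tf, ‖fderiv ℝ φ (re s)‖ ≤ B ∧
      ‖fderiv ℝ (fderiv ℝ φ) (re s)‖ ≤ B ∧ ‖fderiv ℝ T (re s)‖ ≤ B := fun s hs =>
    hB _ (mem_closedBall_zero_iff.2 (hbd s hs).1)
  have h0 : (0 : ℝ) ∈ Icc 0 tf := ⟨le_rfl, ht.1.trans ht.2⟩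
  have hB0 : 0 ≤ B := (norm_nonneg _).trans (hbd' 0 h0).1
  have hw : ∀ s ∈ Icc 0 tf, ‖w s‖ ≤ B * C₀ ^ 2 + B * C₀ := fun s hs =>
    norm_fderiv_fderiv_apply_add_le (hbd' s hs).1 (hbd' s hs).2.1 (hbd s hs).2.1 (hbd s hs).2.2
  have hG' : ∀ s ∈ Icc 0 tf, ‖fderiv ℝ T (re s) (deriv re s)‖ ≤ B * C₀ := fun s hs =>
    ((fderiv ℝ T (re s)).le_opNorm _).trans (by gcongr; exacts [(hbd' s hs).2.2, (hbd s hs).2.1])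
  have hy'0 : ‖deriv xe 0 - fderiv ℝ φ (re 0) (deriv re 0)‖ ≤ M + B * C₀ :=
    (norm_sub_le _ _).trans <| add_le_add hdx0 <|
      ((fderiv ℝ φ (re 0)).le_opNorm _).trans (by gcongr; exacts [(hbd' 0 h0).1, (hbd 0 h0).2.1])
  have hcoer : ∀ s v, c * ‖v‖ ^ 2 ≤ ⟪v, T (re s) v⟫ := fun s v => hApos (re s) v
  have hy0 : xe 0 - φ (re 0) = 0 := sub_eq_zero.2 hx0
  exact norm_le_of_oscillatorEnergy_le (y := fun s => xe s - φ (re s)) hc hε.le hcoer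
    (oscillatorEnergy_le hε hc hG (fun s => Matrix.inner_toEuclideanCLM_of_isSymm (hAsymm _))
      hcoer (fun s => (hdev s).1) (fun s => (hdev s).2) hyode hG' hw hy0 hy'0 t ht)

theorem exists_norm_sub_latentMinimizer_le [ProperSpace X] (hA : ContDiff ℝ 2 A)
    (hb : ContDiff ℝ 2 b) (hAsymm : ∀ r, (A r).IsSymm) (hc : 0 < c)
    (hApos : ∀ r v, c * ‖v‖ ^ 2 ≤ ⟪v, toEuclideanLin (A r) v⟫) (C₀ M tf : ℝ) :
    ∃ C, ∀ ε > 0, ∀ (re : ℝ → X) (xe : ℝ → EuclideanSpace ℝ ι),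
      ContDiff ℝ 2 re → ContDiff ℝ 2 xe →
      (∀ t ∈ Icc 0 tf, ε • deriv (deriv xe) t = b (re t) - toEuclideanLin (A (re t)) (xe t)) →
      (∀ t ∈ Icc 0 tf, ‖re t‖ ≤ C₀ ∧ ‖deriv re t‖ ≤ C₀ ∧ ‖deriv (deriv re) t‖ ≤ C₀) →
      xe 0 = latentMinimizer A b (re 0) → ‖deriv xe 0‖ ≤ M →
      ∀ t ∈ Icc 0 tf, ‖xe t - latentMinimizer A b (re t)‖ ≤ C * √ε := by
  have hφ : ContDiff ℝ 2 (latentMinimizer A b) :=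
    contDiff_latentMinimizer hA hb fun r => Matrix.isUnit_of_coercive hc (hApos r)
  obtain ⟨B, hB⟩ := (isCompact_closedBall (0 : X) C₀).exists_bound_of_continuousOn
    ((hφ.continuous_fderiv two_ne_zero).prodMk
      (((hφ.fderiv_right (m := 1) (by norm_num)).continuous_fderiv one_ne_zero).prodMk
        (hA.toEuclideanCLM.continuous_fderiv two_ne_zero))).continuousOn
  have hB' : ∀ r ∈ closedBall (0 : X) C₀, ‖fderiv ℝ (latentMinimizer A b) r‖ ≤ B ∧
      ‖fderiv ℝ (fderiv ℝ (latentMinimizer A b)) r‖ ≤ B ∧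
      ‖fderiv ℝ (fun r => toEuclideanCLM (𝕜 := ℝ) (A r)) r‖ ≤ B := fun r hr =>
    ⟨(norm_fst_le _).trans (hB r hr), (norm_fst_le _).trans ((norm_snd_le _).trans (hB r hr)),
      (norm_snd_le _).trans ((norm_snd_le _).trans (hB r hr))⟩
  exact ⟨_, fun ε hε re xe hre hxe hode hbd hx0 hdx0 =>
    norm_sub_latentMinimizer_le hA hb hAsymm hc hApos hB' hε hre hxe hode hbd hx0 hdx0⟩

end XLMD

theorem xlmd_sqrt_eps_error_r_p_general
    (d n : ℕ)
    (tf : ℝ)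
    (A : EuclideanSpace ℝ (Fin d) → Matrix (Fin n) (Fin n) ℝ)
    (b : EuclideanSpace ℝ (Fin d) → EuclideanSpace ℝ (Fin n))
    (F : EuclideanSpace ℝ (Fin d) → EuclideanSpace ℝ (Fin d))
    (hA : ContDiff ℝ 3 A) (hb : ContDiff ℝ 3 b) (hF : ContDiff ℝ 2 F)
    (hAsymm : ∀ r, (A r).IsSymm)
    (c : ℝ) (hc : 0 < c)
    (hApos : ∀ (r : EuclideanSpace ℝ (Fin d)) (v : EuclideanSpace ℝ (Fin n)),
      c * ‖v‖ ^ 2 ≤ ⟪v, (Matrix.toEuclideanLin (A r)) v⟫)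
    (C₀ M : ℝ)
    -- the exact solution r⋆ of the exact dynamics, C³, with a priori bounds C₀
    (rs : ℝ → EuclideanSpace ℝ (Fin d))
    (hrs : ContDiff ℝ 3 rs)
    (hrsode : ∀ t ∈ Icc (0:ℝ) tf,
      deriv (deriv rs) t
        = F (rs t) - gradQ A b (rs t)
            ((Matrix.toEuclideanLin (A (rs t))⁻¹) (b (rs t))))
    (hrsbd : ∀ t ∈ Icc (0:ℝ) tf,
      ‖rs t‖ ≤ C₀ ∧ ‖deriv rs t‖ ≤ C₀ ∧ ‖deriv (deriv rs) t‖ ≤ C₀) :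
    -- conclusion: a constant C depending only on A, b, F, r⋆, t_f, C₀, M (not on ε)
    ∃ C > 0, ∀ ε ∈ Ioc (0:ℝ) 1,
      ∀ (re : ℝ → EuclideanSpace ℝ (Fin d)) (xe : ℝ → EuclideanSpace ℝ (Fin n)),
      -- (rε, xε) is a C³ solution of the XLMD system on [0, t_f]
      ContDiff ℝ 3 re → ContDiff ℝ 3 xe →
      (∀ t ∈ Icc (0:ℝ) tf,
        deriv (deriv re) t = F (re t) - gradQ A b (re t) (xe t)) →
      (∀ t ∈ Icc (0:ℝ) tf,
        ε • deriv (deriv xe) t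
          = b (re t) - (Matrix.toEuclideanLin (A (re t))) (xe t)) →
      re 0 = rs 0 → deriv re 0 = deriv rs 0 →
      -- a priori bounds with constant C₀
      (∀ t ∈ Icc (0:ℝ) tf,
        ‖re t‖ ≤ C₀ ∧ ‖deriv re t‖ ≤ C₀ ∧ ‖deriv (deriv re) t‖ ≤ C₀ ∧
        ‖xe t‖ ≤ C₀ ∧ Real.sqrt ε * ‖deriv xe t‖ ≤ C₀) →
      -- compatible initial condition with constant M
      xe 0 = (Matrix.toEuclideanLin (A (rs 0))⁻¹) (b (rs 0)) →
      ‖deriv xe 0‖ ≤ M →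
      ∀ t ∈ Icc (0:ℝ) tf,
        ‖re t - rs t‖ ≤ C * Real.sqrt ε ∧
        ‖deriv re t - deriv rs t‖ ≤ C * Real.sqrt ε := by
  have hφ : ContDiff ℝ 3 (latentMinimizer A b) :=
    contDiff_latentMinimizer hA hb fun r => Matrix.isUnit_of_coercive hc (hApos r)
  obtain ⟨C₂, hC₂⟩ := exists_norm_sub_latentMinimizer_le (hA.of_le (by norm_num))
    (hb.of_le (by norm_num)) hAsymm hc hApos C₀ M tf
  obtain ⟨K, hK⟩ := exists_norm_sub_le_of_slaved
    (((hF.comp contDiff_fst).sub (contDiff_gradQ (k := 2) hA hb)).of_le (by norm_num))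
    (hφ.of_le (by norm_num)) (hrs.of_le (by norm_num)) hrsode fun t ht => (hrsbd t ht).1
  refine ⟨max (K * C₂) 1, by positivity, ?_⟩
  rintro ε ⟨hε, -⟩ re xe hre hxe hreode hxeode hre0 hdre0 hbd hx0 hdx0
  have hlatent := hC₂ ε hε re xe (hre.of_le (by norm_num)) (hxe.of_le (by norm_num)) hxeode
    (fun t ht => ⟨(hbd t ht).1, (hbd t ht).2.1, (hbd t ht).2.2.1⟩) (hre0 ▸ hx0) hdx0
  have hslow := hK _ re xe (hre.of_le (by norm_num)) hreode
    (fun t ht => ⟨(hbd t ht).1, (hbd t ht).2.2.2.1⟩) hlatent hre0 hdre0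
  have hC : K * (C₂ * √ε) ≤ max (K * C₂) 1 * √ε := by
    rw [← mul_assoc]
    gcongr
    exact le_max_left _ _
  exact fun t ht => ⟨(hslow t ht).1.trans hC, (hslow t ht).2.trans hC⟩

theorem xlmd_sqrt_eps_error_r_p
    (d n : ℕ) (hd : 1 ≤ d) (hn : 1 ≤ n)
    (tf : ℝ) (htf : 0 < tf)
    (A : EuclideanSpace ℝ (Fin d) → Matrix (Fin n) (Fin n) ℝ)
    (b : EuclideanSpace ℝ (Fin d) → EuclideanSpace ℝ (Fin n))
    (F : EuclideanSpace ℝ (Fin d) → EuclideanSpace ℝ (Fin d))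
    (hA : ContDiff ℝ 3 A) (hb : ContDiff ℝ 3 b) (hF : ContDiff ℝ 2 F)
    (hAsymm : ∀ r, (A r).IsSymm)
    (c : ℝ) (hc : 0 < c)
    (hApos : ∀ (r : EuclideanSpace ℝ (Fin d)) (v : EuclideanSpace ℝ (Fin n)),
      c * ‖v‖ ^ 2 ≤ ⟪v, (Matrix.toEuclideanLin (A r)) v⟫)
    (C₀ M : ℝ)
    -- the exact solution r⋆ of the exact dynamics, C³, with a priori bounds C₀
    (rs : ℝ → EuclideanSpace ℝ (Fin d))
    (hrs : ContDiff ℝ 3 rs)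
    (hrsode : ∀ t ∈ Icc (0:ℝ) tf,
      deriv (deriv rs) t
        = F (rs t) - gradQ A b (rs t)
            ((Matrix.toEuclideanLin (A (rs t))⁻¹) (b (rs t))))
    (hrsbd : ∀ t ∈ Icc (0:ℝ) tf,
      ‖rs t‖ ≤ C₀ ∧ ‖deriv rs t‖ ≤ C₀ ∧ ‖deriv (deriv rs) t‖ ≤ C₀) :
    -- conclusion: a constant C depending only on A, b, F, r⋆, t_f, C₀, M (not on ε)
    ∃ C > 0, ∀ ε ∈ Ioc (0:ℝ) 1,
      ∀ (re : ℝ → EuclideanSpace ℝ (Fin d)) (xe : ℝ → EuclideanSpace ℝ (Fin n)),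
      -- (rε, xε) is a C³ solution of the XLMD system on [0, t_f]
      ContDiff ℝ 3 re → ContDiff ℝ 3 xe →
      (∀ t ∈ Icc (0:ℝ) tf,
        deriv (deriv re) t = F (re t) - gradQ A b (re t) (xe t)) →
      (∀ t ∈ Icc (0:ℝ) tf,
        ε • deriv (deriv xe) t
          = b (re t) - (Matrix.toEuclideanLin (A (re t))) (xe t)) →
      re 0 = rs 0 → deriv re 0 = deriv rs 0 →
      -- a priori bounds with constant C₀
      (∀ t ∈ Icc (0:ℝ) tf,
        ‖re t‖ ≤ C₀ ∧ ‖deriv re t‖ ≤ C₀ ∧ ‖deriv (deriv re) t‖ ≤ C₀ ∧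
        ‖xe t‖ ≤ C₀ ∧ Real.sqrt ε * ‖deriv xe t‖ ≤ C₀) →
      -- compatible initial condition with constant M
      xe 0 = (Matrix.toEuclideanLin (A (rs 0))⁻¹) (b (rs 0)) →
      ‖deriv xe 0‖ ≤ M →
      ∀ t ∈ Icc (0:ℝ) tf,
        ‖re t - rs t‖ ≤ C * Real.sqrt ε ∧
        ‖deriv re t - deriv rs t‖ ≤ C * Real.sqrt ε :=
  xlmd_sqrt_eps_error_r_p_general d n tf A b F hA hb hF hAsymm c hc hApos C₀ M rs hrs hrsode hrsbd

end
end

section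
/- Let ψ : [0,t_f] → ℝ^n be continuous with |ψ(t)| ≤ C₀ for all t, let M > 0, and for ε ∈ (0,1] let y : [0,t_f] → ℝ^n be the C² solution of ε·y''(t) = −A(t)·y(t) + ε·ψ(t) with y(0) = 0 and |y'(0)| ≤ M. Then there exists C > 0 depending only on n, c, C₀, t_f, M (and not on ε) such that for all t ∈ [0,t_f]: |y(t)| ≤ C·ε^{1/2} and |y'(t)| ≤ C. -/
/-! The energy `ε‖y'‖² + ⟪y, A y⟫` is nonnegative and, by coercivity of `A`, controls both
`c‖y‖²` and `ε‖y'‖²`. Along a solution the terms `⟪y', A y⟫` cancel from its derivative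
(`A` being symmetric), leaving `2ε⟪ψ, y'⟫ + ⟪y, A' y⟫`, which is at most `(1 + C₀/c)` times the
energy plus `εC₀²`. Since the energy starts at `ε‖y'(0)‖² ≤ εM²`, Gronwall's inequality keeps it
of order `ε` on `[0, t_f]`, which is exactly `‖y‖ = O(√ε)` and `‖y'‖ = O(1)`. -/

open scoped RealInnerProductSpace
open Set

noncomputable section

attribute [local instance] Matrix.normedAddCommGroup Matrix.normedSpace

open Real in
theorem gronwallBound_le_mul_exp {δ K ε x : ℝ} (hK : 1 ≤ K) (hε : 0 ≤ ε) (hx : 0 ≤ x) :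
    gronwallBound δ K ε x ≤ (δ + ε) * exp (K * x) := by
  have hexp : 1 ≤ exp (K * x) := one_le_exp (by positivity)
  have hεK : ε / K ≤ ε := div_le_self hε hK
  rw [gronwallBound_of_K_ne_0 (by positivity)]
  nlinarith

section Energy

variable {E : Type*} [NormedAddCommGroup E] [InnerProductSpace ℝ E]

def energy (ε : ℝ) (B : ℝ → E →L[ℝ] E) (y y' : ℝ → E) (t : ℝ) : ℝ :=
  ε * ‖y' t‖ ^ 2 + ⟪y t, B t (y t)⟫

theorem hasDerivAt_energy {ε t : ℝ} {B : ℝ → E →L[ℝ] E} {B' : E →L[ℝ] E} {y y' : ℝ → E}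
    {a p : E} (hB : HasDerivAt B B' t) (hy : HasDerivAt y (y' t) t) (hy' : HasDerivAt y' a t)
    (hsym : (B t : E →ₗ[ℝ] E).IsSymmetric) (hode : ε • a = -B t (y t) + ε • p) :
    HasDerivAt (energy ε B y y') (2 * ε * ⟪p, y' t⟫ + ⟪y t, B' (y t)⟫) t := by
  refine ((hy'.norm_sq.const_mul ε).add (hy.inner ℝ (hB.clm_apply hy))).congr_deriv ?_
  have hεa : ε * ⟪y' t, a⟫ = -⟪y' t, B t (y t)⟫ + ε * ⟪p, y' t⟫ := by
    rw [← real_inner_smul_right, hode, inner_add_right, inner_neg_right, real_inner_smul_right,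
      real_inner_comm p]
  have hBy : ⟪y t, B t (y' t)⟫ = ⟪y' t, B t (y t)⟫ :=
    (hsym (y t) (y' t)).symm.trans (real_inner_comm _ _)
  rw [inner_add_right, hBy]
  linear_combination 2 * hεa

theorem abs_deriv_energy_le {ε c C₀ : ℝ} (hε : 0 ≤ ε) (hc : 0 < c) {B B' : E →L[ℝ] E}
    {u v p : E} (hcoer : c * ‖u‖ ^ 2 ≤ ⟪u, B u⟫) (hp : ‖p‖ ≤ C₀) (hB' : ‖B'‖ ≤ C₀) :
    |2 * ε * ⟪p, v⟫ + ⟪u, B' u⟫| ≤ (1 + C₀ / c) * (ε * ‖v‖ ^ 2 + ⟪u, B u⟫) + ε * C₀ ^ 2 := by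
  have hC₀ : 0 ≤ C₀ := (norm_nonneg p).trans hp
  have hforce : |2 * ε * ⟪p, v⟫| ≤ ε * ‖v‖ ^ 2 + ε * C₀ ^ 2 := by
    have hpv : |⟪p, v⟫| ≤ C₀ * ‖v‖ :=
      (abs_real_inner_le_norm p v).trans (mul_le_mul_of_nonneg_right hp (norm_nonneg v))
    rw [abs_mul, abs_of_nonneg (by positivity)]
    nlinarith [sq_nonneg (‖v‖ - C₀)]
  have hB'u : |⟪u, B' u⟫| ≤ C₀ / c * ⟪u, B u⟫ := calc
    |⟪u, B' u⟫| ≤ ‖u‖ * (‖B'‖ * ‖u‖) :=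
      (abs_real_inner_le_norm _ _).trans (by gcongr; exact B'.le_opNorm u)
    _ = ‖B'‖ * ‖u‖ ^ 2 := by ring
    _ ≤ C₀ * ‖u‖ ^ 2 := by gcongr
    _ = C₀ / c * (c * ‖u‖ ^ 2) := by field_simp
    _ ≤ C₀ / c * ⟪u, B u⟫ := by gcongr
  have hBu : 0 ≤ ⟪u, B u⟫ := le_trans (by positivity) hcoer
  have : 0 ≤ C₀ / c * (ε * ‖v‖ ^ 2) := by positivity
  linarith [abs_add_le (2 * ε * ⟪p, v⟫) ⟪u, B' u⟫]

theorem energy_le {ε c C₀ M T : ℝ} (hε : 0 < ε) (hc : 0 < c) {B B' : ℝ → E →L[ℝ] E}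
    {y y' y'' ψ : ℝ → E} (hB : ∀ t, HasDerivAt B (B' t) t) (hy : ∀ t, HasDerivAt y (y' t) t)
    (hy' : ∀ t, HasDerivAt y' (y'' t) t)
    (hsym : ∀ t ∈ Icc 0 T, (B t : E →ₗ[ℝ] E).IsSymmetric)
    (hcoer : ∀ t ∈ Icc 0 T, ∀ u, c * ‖u‖ ^ 2 ≤ ⟪u, B t u⟫)
    (hB' : ∀ t ∈ Icc 0 T, ‖B' t‖ ≤ C₀) (hψ : ∀ t ∈ Icc 0 T, ‖ψ t‖ ≤ C₀)
    (hode : ∀ t ∈ Icc 0 T, ε • y'' t = -B t (y t) + ε • ψ t)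
    (hy0 : y 0 = 0) (hy'0 : ‖y' 0‖ ≤ M) :
    ∀ t ∈ Icc 0 T, energy ε B y y' t ≤ ε * ((M ^ 2 + C₀ ^ 2) * Real.exp ((1 + C₀ / c) * T)) := by
  intro t ht
  have hT : (0 : ℝ) ∈ Icc 0 T := ⟨le_rfl, ht.1.trans ht.2⟩
  have hC₀ : 0 ≤ C₀ := (norm_nonneg _).trans (hψ 0 hT)
  have hderiv : ∀ s ∈ Icc 0 T,
      HasDerivAt (energy ε B y y') (2 * ε * ⟪ψ s, y' s⟫ + ⟪y s, B' s (y s)⟫) s := fun s hs =>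
    hasDerivAt_energy (hB s) (hy s) (hy' s) (hsym s hs) (hode s hs)
  have henergy_nonneg : ∀ s ∈ Icc 0 T, 0 ≤ energy ε B y y' s := fun s hs =>
    add_nonneg (by positivity) (le_trans (by positivity) (hcoer s hs (y s)))
  have hinit : ‖energy ε B y y' 0‖ ≤ ε * M ^ 2 := by
    have : ‖y' 0‖ ^ 2 ≤ M ^ 2 := pow_le_pow_left₀ (norm_nonneg _) hy'0 2
    simp only [energy, hy0, map_zero, inner_zero_left, add_zero, Real.norm_eq_abs,
      abs_of_nonneg (by positivity : 0 ≤ ε * ‖y' 0‖ ^ 2)]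
    gcongr
  have hgronwall := norm_le_gronwallBound_of_norm_deriv_right_le
    (fun s hs => (hderiv s hs).continuousAt.continuousWithinAt)
    (fun s hs => (hderiv s (Ico_subset_Icc_self hs)).hasDerivWithinAt) hinit
    (fun s hs => by
      rw [Real.norm_eq_abs, Real.norm_eq_abs,
        abs_of_nonneg (henergy_nonneg s (Ico_subset_Icc_self hs))]
      exact abs_deriv_energy_le hε.le hc (hcoer s (Ico_subset_Icc_self hs) _)
        (hψ s (Ico_subset_Icc_self hs)) (hB' s (Ico_subset_Icc_self hs)))
    t ht
  calc energy ε B y y' t ≤ gronwallBound (ε * M ^ 2) (1 + C₀ / c) (ε * C₀ ^ 2) t := by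
        simpa [abs_of_nonneg (henergy_nonneg t ht)] using hgronwall
    _ ≤ (ε * M ^ 2 + ε * C₀ ^ 2) * Real.exp ((1 + C₀ / c) * t) :=
        gronwallBound_le_mul_exp (by simp only [le_add_iff_nonneg_right]; positivity)
          (by positivity) ht.1
    _ ≤ ε * ((M ^ 2 + C₀ ^ 2) * Real.exp ((1 + C₀ / c) * T)) := by
        rw [← mul_add, mul_assoc]
        gcongr
        exact ht.2

theorem norm_le_of_energy_le {ε c D : ℝ} (hε : 0 < ε) (hc : 0 < c) {B : E →L[ℝ] E} {u v : E}
    (hcoer : c * ‖u‖ ^ 2 ≤ ⟪u, B u⟫) (hE : ε * ‖v‖ ^ 2 + ⟪u, B u⟫ ≤ ε * D) :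
    ‖u‖ ≤ √(D / min c 1) * √ε ∧ ‖v‖ ≤ √(D / min c 1) := by
  have hm : 0 < min c 1 := lt_min hc one_pos
  have hD : 0 ≤ D := nonneg_of_mul_nonneg_right (by nlinarith) hε
  have hDm : D ≤ D / min c 1 := le_div_self hD hm (min_le_right c 1)
  constructor
  · rw [← Real.sqrt_mul (by positivity), Real.le_sqrt (norm_nonneg u) (by positivity)]
    calc ‖u‖ ^ 2 ≤ ε * D / c := by rw [le_div_iff₀ hc]; nlinarith
      _ ≤ ε * D / min c 1 := by gcongr; exact min_le_left c 1
      _ = D / min c 1 * ε := by ring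
  · rw [Real.le_sqrt (norm_nonneg v) (by positivity)]
    have : ε * ‖v‖ ^ 2 ≤ ε * D := by nlinarith
    exact (le_of_mul_le_mul_left this hε).trans hDm

end Energy

theorem HasDerivAt.toEuclideanCLM {ι : Type*} [Fintype ι] [DecidableEq ι]
    {A : ℝ → Matrix ι ι ℝ} {A' : Matrix ι ι ℝ} {t : ℝ} (hA : HasDerivAt A A' t) :
    HasDerivAt (fun s => Matrix.toEuclideanCLM (𝕜 := ℝ) (A s))
      (Matrix.toEuclideanCLM (𝕜 := ℝ) A') t :=
  (LinearMap.toContinuousLinearMap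
    (Matrix.toEuclideanCLM (n := ι) (𝕜 := ℝ)).toAlgEquiv.toLinearMap).hasFDerivAt.comp_hasDerivAt
      t hA

theorem inhomogeneous_residual_bound_general
    (n : ℕ)
    (tf : ℝ)
    (c C₀ : ℝ) (hc : 0 < c) (hC₀ : 0 < C₀)
    (M : ℝ) :
    -- the constant C depends only on n, c, C₀, t_f, M (and not on ε)
    ∃ C > 0, ∀ A : ℝ → Matrix (Fin n) (Fin n) ℝ,
      ContDiff ℝ 1 A →
      (∀ t ∈ Icc (0:ℝ) tf, (A t).IsSymm) →
      (∀ t ∈ Icc (0:ℝ) tf, ∀ v : EuclideanSpace ℝ (Fin n),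
        c * ‖v‖ ^ 2 ≤ ⟪v, (Matrix.toEuclideanLin (A t)) v⟫) →
      (∀ t ∈ Icc (0:ℝ) tf,
        ‖Matrix.toEuclideanCLM (𝕜 := ℝ) (A t)‖
          + ‖Matrix.toEuclideanCLM (𝕜 := ℝ) (deriv A t)‖ ≤ C₀) →
      -- ψ is continuous and bounded by C₀
      ∀ ψ : ℝ → EuclideanSpace ℝ (Fin n),
      ContinuousOn ψ (Icc (0:ℝ) tf) →
      (∀ t ∈ Icc (0:ℝ) tf, ‖ψ t‖ ≤ C₀) →
      ∀ ε ∈ Ioc (0:ℝ) 1, ∀ y : ℝ → EuclideanSpace ℝ (Fin n),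
      -- y is the C² solution of ε·y'' = −A(t)·y + ε·ψ with y(0)=0, |y'(0)| ≤ M
      ContDiff ℝ 2 y →
      (∀ t ∈ Icc (0:ℝ) tf,
        ε • deriv (deriv y) t
          = -(Matrix.toEuclideanLin (A t)) (y t) + ε • ψ t) →
      y 0 = 0 → ‖deriv y 0‖ ≤ M →
      ∀ t ∈ Icc (0:ℝ) tf,
        ‖y t‖ ≤ C * Real.sqrt ε ∧ ‖deriv y t‖ ≤ C := by
  refine ⟨√((M ^ 2 + C₀ ^ 2) * Real.exp ((1 + C₀ / c) * tf) / min c 1), by positivity, ?_⟩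
  intro A hA hsym hcoer hbound ψ _ hψ ε hε y hy hode hy0 hy'0 t ht
  have hB : ∀ s, HasDerivAt (fun s => Matrix.toEuclideanCLM (𝕜 := ℝ) (A s))
      (Matrix.toEuclideanCLM (𝕜 := ℝ) (deriv A s)) s := fun s =>
    ((hA.differentiable one_ne_zero) s).hasDerivAt.toEuclideanCLM
  have hsym' : ∀ s ∈ Icc 0 tf,
      (Matrix.toEuclideanCLM (𝕜 := ℝ) (A s) : _ →ₗ[ℝ] EuclideanSpace ℝ (Fin n)).IsSymmetric :=
    fun s hs => by
      rw [Matrix.coe_toEuclideanCLM_eq_toEuclideanLin, Matrix.isSymmetric_toEuclideanLin_iff,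
        Matrix.isHermitian_iff_isSymm]
      exact hsym s hs
  have hB' : ∀ s ∈ Icc 0 tf, ‖Matrix.toEuclideanCLM (𝕜 := ℝ) (deriv A s)‖ ≤ C₀ := fun s hs =>
    (le_add_of_nonneg_left (norm_nonneg _)).trans (hbound s hs)
  exact norm_le_of_energy_le hε.1 hc (hcoer t ht (y t))
    (energy_le hε.1 hc hB (fun s => (hy.differentiable two_ne_zero s).hasDerivAt)
      (fun s => (hy.differentiable_deriv_two s).hasDerivAt) hsym' hcoer hB' hψ hode hy0 hy'0 t ht)

theorem inhomogeneous_residual_bound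
    (n : ℕ) (hn : 1 ≤ n)
    (tf : ℝ) (htf : 0 < tf)
    (c C₀ : ℝ) (hc : 0 < c) (hC₀ : 0 < C₀)
    (M : ℝ) (hM : 0 < M) :
    -- the constant C depends only on n, c, C₀, t_f, M (and not on ε)
    ∃ C > 0, ∀ A : ℝ → Matrix (Fin n) (Fin n) ℝ,
      ContDiff ℝ 1 A →
      (∀ t ∈ Icc (0:ℝ) tf, (A t).IsSymm) →
      (∀ t ∈ Icc (0:ℝ) tf, ∀ v : EuclideanSpace ℝ (Fin n),
        c * ‖v‖ ^ 2 ≤ ⟪v, (Matrix.toEuclideanLin (A t)) v⟫) →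
      (∀ t ∈ Icc (0:ℝ) tf,
        ‖Matrix.toEuclideanCLM (𝕜 := ℝ) (A t)‖
          + ‖Matrix.toEuclideanCLM (𝕜 := ℝ) (deriv A t)‖ ≤ C₀) →
      -- ψ is continuous and bounded by C₀
      ∀ ψ : ℝ → EuclideanSpace ℝ (Fin n),
      ContinuousOn ψ (Icc (0:ℝ) tf) →
      (∀ t ∈ Icc (0:ℝ) tf, ‖ψ t‖ ≤ C₀) →
      ∀ ε ∈ Ioc (0:ℝ) 1, ∀ y : ℝ → EuclideanSpace ℝ (Fin n),
      -- y is the C² solution of ε·y'' = −A(t)·y + ε·ψ with y(0)=0, |y'(0)| ≤ M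
      ContDiff ℝ 2 y →
      (∀ t ∈ Icc (0:ℝ) tf,
        ε • deriv (deriv y) t
          = -(Matrix.toEuclideanLin (A t)) (y t) + ε • ψ t) →
      y 0 = 0 → ‖deriv y 0‖ ≤ M →
      ∀ t ∈ Icc (0:ℝ) tf,
        ‖y t‖ ≤ C * Real.sqrt ε ∧ ‖deriv y t‖ ≤ C :=
  inhomogeneous_residual_bound_general n tf c C₀ hc hC₀ M

end
end

section
/- Let T > 0, n ≥ 1, and c, C₀ > 0. Let κ : [0,T] → ℝ be C² with κ'(t) ≥ c and |κ'(t)| + |κ''(t)| ≤ C₀ for all t, and let g : [0,T] → ℝ^n be C¹ with |g(t)| + |g'(t)| ≤ C₀ for all t. Then there exists C > 0 depending only on c, C₀, T, n such that for every ε ∈ (0,1] and every t ∈ [0,T]: |∫₀^t sin((κ(t)−κ(s))/ε^{1/2})·g(s) ds| ≤ C·ε^{1/2} and |∫₀^t cos((κ(t)−κ(s))/ε^{1/2})·g(s) ds| ≤ C·ε^{1/2}. -/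
/-
With `σ = √ε`, the function `u(s) = cos((κ t - κ s)/σ)` has derivative `sin(…) κ'(s)/σ`, so
`sin(…) • g = σ • (u' • g/κ')`, and likewise for `cos` with `u = -sin(…)`. The lower bound
`κ' ≥ c` keeps `g/κ'` and its derivative bounded, so one integration by parts, using `|u| ≤ 1`,
bounds the integral by `σ` times a constant.
-/

open Set

noncomputable section

open MeasureTheory intervalIntegral
open scoped Interval

section

variable {E : Type*} [NormedAddCommGroup E] [NormedSpace ℝ E]

theorem norm_integral_deriv_smul_le [CompleteSpace E] {a b M A B : ℝ} (hab : a ≤ b)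
    {u u' : ℝ → ℝ} {v v' : ℝ → E}
    (hu : ∀ x ∈ Icc a b, HasDerivAt u (u' x) x) (hv : ∀ x ∈ Icc a b, HasDerivAt v (v' x) x)
    (hu' : IntervalIntegrable u' volume a b) (hv' : IntervalIntegrable v' volume a b)
    (hu_le : ∀ x ∈ Icc a b, |u x| ≤ M) (hv_le : ∀ x ∈ Icc a b, ‖v x‖ ≤ A)
    (hv'_le : ∀ x ∈ Icc a b, ‖v' x‖ ≤ B) :
    ‖∫ x in a..b, u' x • v x‖ ≤ M * (2 * A + B * (b - a)) := by
  have hM : 0 ≤ M := (abs_nonneg _).trans (hu_le a ⟨le_rfl, hab⟩)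
  have huv : ∀ x ∈ Icc a b, ‖u x • v x‖ ≤ M * A := fun x hx => by
    rw [norm_smul, Real.norm_eq_abs]
    exact mul_le_mul (hu_le x hx) (hv_le x hx) (norm_nonneg _) hM
  have huv' : ∀ x ∈ Ι a b, ‖u x • v' x‖ ≤ M * B := fun x hx => by
    have hx : x ∈ Icc a b := Ioc_subset_Icc_self (by rwa [uIoc_of_le hab] at hx)
    rw [norm_smul, Real.norm_eq_abs]
    exact mul_le_mul (hu_le x hx) (hv'_le x hx) (norm_nonneg _) hM
  have hibp : ∫ x in a..b, u' x • v x
      = u b • v b - u a • v a - ∫ x in a..b, u x • v' x := by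
    rw [integral_smul_deriv_eq_deriv_smul (fun x hx => hu x (uIcc_of_le hab ▸ hx))
      (fun x hx => hv x (uIcc_of_le hab ▸ hx)) hu' hv', sub_sub_cancel]
  have hab' : a ∈ Icc a b ∧ b ∈ Icc a b := ⟨⟨le_rfl, hab⟩, ⟨hab, le_rfl⟩⟩
  calc ‖∫ x in a..b, u' x • v x‖
      ≤ ‖u b • v b‖ + ‖u a • v a‖ + ‖∫ x in a..b, u x • v' x‖ := by
        rw [hibp]; exact (norm_sub_le _ _).trans (add_le_add_left (norm_sub_le _ _) _)
    _ ≤ M * A + M * A + M * B * |b - a| := by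
        gcongr
        exacts [huv b hab'.2, huv a hab'.1, norm_integral_le_of_norm_le_const huv']
    _ = M * (2 * A + B * (b - a)) := by rw [abs_of_nonneg (sub_nonneg.2 hab)]; ring

theorem norm_inv_smul_le {c y : ℝ} (hc : 0 < c) (hy : c ≤ y) (z : E) :
    ‖y⁻¹ • z‖ ≤ ‖z‖ / c := by
  rw [norm_smul, norm_inv, Real.norm_of_nonneg (hc.le.trans hy), inv_mul_eq_div]
  exact div_le_div_of_nonneg_left (norm_nonneg z) hc hy

theorem norm_inv_smul_add_le {c y y' : ℝ} (hc : 0 < c) (hy : c ≤ y) (z z' : E) :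
    ‖y⁻¹ • z' + (-y' / y ^ 2) • z‖ ≤ ‖z'‖ / c + |y'| * ‖z‖ / c ^ 2 := by
  have hsecond : ‖(-y' / y ^ 2) • z‖ ≤ |y'| * ‖z‖ / c ^ 2 := by
    rw [norm_smul, Real.norm_eq_abs, abs_div, abs_neg, abs_of_nonneg (sq_nonneg y),
      div_mul_eq_mul_div]
    exact div_le_div_of_nonneg_left (by positivity) (by positivity)
      (pow_le_pow_left₀ hc.le hy 2)
  exact (norm_add_le _ _).trans (add_le_add (norm_inv_smul_le hc hy z') hsecond)

theorem norm_integral_smul_le_of_hasDerivAt_mul [CompleteSpace E] {a b c K G G' σ : ℝ}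
    (hab : a ≤ b) (hc : 0 < c) (hσ : 0 < σ) {f f' u w : ℝ → ℝ} {g g' : ℝ → E}
    (hf : ∀ x ∈ Icc a b, HasDerivAt f (f' x) x) (hf' : ContinuousOn f' (Icc a b))
    (hg : ∀ x ∈ Icc a b, HasDerivAt g (g' x) x) (hg' : ContinuousOn g' (Icc a b))
    (hfc : ∀ x ∈ Icc a b, c ≤ f x) (hf'K : ∀ x ∈ Icc a b, |f' x| ≤ K)
    (hgG : ∀ x ∈ Icc a b, ‖g x‖ ≤ G) (hg'G : ∀ x ∈ Icc a b, ‖g' x‖ ≤ G')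
    (hw : ContinuousOn w (Icc a b)) (hu : ∀ x ∈ Icc a b, HasDerivAt u (w x * f x / σ) x)
    (hu_le : ∀ x ∈ Icc a b, |u x| ≤ 1) :
    ‖∫ x in a..b, w x • g x‖ ≤ σ * (2 * (G / c) + (G' / c + K * G / c ^ 2) * (b - a)) := by
  have hK : 0 ≤ K := (abs_nonneg _).trans (hf'K a ⟨le_rfl, hab⟩)
  have hf0 : ∀ x ∈ Icc a b, f x ≠ 0 := fun x hx => (hc.trans_le (hfc x hx)).ne'
  have hfcont : ContinuousOn f (Icc a b) := fun x hx => (hf x hx).continuousAt.continuousWithinAt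
  have hgcont : ContinuousOn g (Icc a b) := fun x hx => (hg x hx).continuousAt.continuousWithinAt
  set v : ℝ → E := fun x => (f x)⁻¹ • g x
  set v' : ℝ → E := fun x => (f x)⁻¹ • g' x + (-f' x / f x ^ 2) • g x
  have hv : ∀ x ∈ Icc a b, HasDerivAt v (v' x) x := fun x hx =>
    ((hf x hx).inv (hf0 x hx)).smul (hg x hx)
  have hu'int : IntervalIntegrable (fun x => w x * f x / σ) volume a b :=
    ((hw.mul hfcont).div_const σ).intervalIntegrable_of_Icc hab
  have hv'int : IntervalIntegrable v' volume a b := by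
    refine (ContinuousOn.add ?_ ?_).intervalIntegrable_of_Icc hab
    · exact (hfcont.inv₀ hf0).smul hg'
    · exact (hf'.neg.div (hfcont.pow 2) fun x hx => pow_ne_zero 2 (hf0 x hx)).smul hgcont
  have hintegrand : ∫ x in a..b, w x • g x = σ • ∫ x in a..b, (w x * f x / σ) • v x := by
    rw [← intervalIntegral.integral_smul]
    refine integral_congr fun x hx => ?_
    rw [uIcc_of_le hab] at hx
    simp only [v, smul_smul]
    congr 1
    field_simp [hf0 x hx]
  rw [hintegrand, norm_smul, Real.norm_of_nonneg hσ.le, ← one_mul (2 * _ + _)]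
  gcongr
  refine norm_integral_deriv_smul_le hab hu hv hu'int hv'int hu_le
    (fun x hx => (norm_inv_smul_le hc (hfc x hx) _).trans ?_)
    (fun x hx => (norm_inv_smul_add_le hc (hfc x hx) _ _).trans ?_)
  · gcongr; exact hgG x hx
  · gcongr
    · exact hg'G x hx
    · exact hf'K x hx
    · exact hgG x hx

end

theorem hasDerivAt_sub_div {κ : ℝ → ℝ} {x : ℝ} (hκ : DifferentiableAt ℝ κ x) (t σ : ℝ) :
    HasDerivAt (fun s => (κ t - κ s) / σ) (-(deriv κ x / σ)) x := by
  simpa [neg_div] using (hκ.hasDerivAt.const_sub (κ t)).div_const σ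

theorem hasDerivAt_cos_sub_div {κ : ℝ → ℝ} {x : ℝ} (hκ : DifferentiableAt ℝ κ x) (t σ : ℝ) :
    HasDerivAt (fun s => Real.cos ((κ t - κ s) / σ))
      (Real.sin ((κ t - κ x) / σ) * deriv κ x / σ) x :=
  (hasDerivAt_sub_div hκ t σ).cos.congr_deriv (by ring)

theorem hasDerivAt_neg_sin_sub_div {κ : ℝ → ℝ} {x : ℝ} (hκ : DifferentiableAt ℝ κ x) (t σ : ℝ) :
    HasDerivAt (fun s => -Real.sin ((κ t - κ s) / σ))
      (Real.cos ((κ t - κ x) / σ) * deriv κ x / σ) x :=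
  (hasDerivAt_sub_div hκ t σ).sin.neg.congr_deriv (by ring)

theorem oscillatory_integral_bound_general
    (T : ℝ) (hT : 0 < T)
    (n : ℕ)
    (c C₀ : ℝ) (hc : 0 < c) (hC₀ : 0 < C₀) :
    -- the constant C depends only on c, C₀, T, n
    ∃ C > 0, ∀ κ : ℝ → ℝ,
      ContDiff ℝ 2 κ →
      (∀ t ∈ Icc (0:ℝ) T, c ≤ deriv κ t) →
      (∀ t ∈ Icc (0:ℝ) T, |deriv κ t| + |deriv (deriv κ) t| ≤ C₀) →
      ∀ g : ℝ → EuclideanSpace ℝ (Fin n),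
      ContDiff ℝ 1 g →
      (∀ t ∈ Icc (0:ℝ) T, ‖g t‖ + ‖deriv g t‖ ≤ C₀) →
      ∀ ε ∈ Ioc (0:ℝ) 1, ∀ t ∈ Icc (0:ℝ) T,
        ‖∫ s in (0:ℝ)..t, Real.sin ((κ t - κ s) / Real.sqrt ε) • g s‖
          ≤ C * Real.sqrt ε ∧
        ‖∫ s in (0:ℝ)..t, Real.cos ((κ t - κ s) / Real.sqrt ε) • g s‖
          ≤ C * Real.sqrt ε := by
  refine ⟨2 * (C₀ / c) + (C₀ / c + C₀ * C₀ / c ^ 2) * T, by positivity, ?_⟩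
  intro κ hκ hκc hκC g hg hgC ε hε t ht
  have hσ : 0 < √ε := Real.sqrt_pos.2 hε.1
  have hsub : Icc 0 t ⊆ Icc 0 T := Icc_subset_Icc le_rfl ht.2
  have hκ1 : Differentiable ℝ κ := hκ.differentiable two_ne_zero
  have hκ2 : Differentiable ℝ (deriv κ) := hκ.deriv'.differentiable one_ne_zero
  have bound : ∀ u w : ℝ → ℝ, Continuous w → (∀ x, HasDerivAt u (w x * deriv κ x / √ε) x) →
      (∀ x, |u x| ≤ 1) → ‖∫ s in (0:ℝ)..t, w s • g s‖
        ≤ (2 * (C₀ / c) + (C₀ / c + C₀ * C₀ / c ^ 2) * T) * √ε := fun u w hw hu hu_le => by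
    refine (norm_integral_smul_le_of_hasDerivAt_mul ht.1 hc hσ (fun x _ => (hκ2 x).hasDerivAt)
      (hκ.deriv'.continuous_deriv le_rfl).continuousOn
      (fun x _ => (hg.differentiable one_ne_zero x).hasDerivAt)
      (hg.continuous_deriv le_rfl).continuousOn (fun x hx => hκc x (hsub hx))
      (fun x hx => le_of_add_le_of_nonneg_right (hκC x (hsub hx)) (abs_nonneg _))
      (fun x hx => le_of_add_le_of_nonneg_left (hgC x (hsub hx)) (norm_nonneg _))
      (fun x hx => le_of_add_le_of_nonneg_right (hgC x (hsub hx)) (norm_nonneg _))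
      hw.continuousOn (fun x _ => hu x) (fun x _ => hu_le x)).trans ?_
    rw [mul_comm _ √ε, sub_zero]
    gcongr
    exact ht.2
  exact ⟨bound _ _ (by fun_prop) (fun x => hasDerivAt_cos_sub_div (hκ1 x) t √ε)
      (fun _ => Real.abs_cos_le_one _),
    bound _ _ (by fun_prop) (fun x => hasDerivAt_neg_sin_sub_div (hκ1 x) t √ε)
      (fun _ => (abs_neg _).trans_le (Real.abs_sin_le_one _))⟩

theorem oscillatory_integral_bound
    (T : ℝ) (hT : 0 < T)
    (n : ℕ) (hn : 1 ≤ n)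
    (c C₀ : ℝ) (hc : 0 < c) (hC₀ : 0 < C₀) :
    -- the constant C depends only on c, C₀, T, n
    ∃ C > 0, ∀ κ : ℝ → ℝ,
      ContDiff ℝ 2 κ →
      (∀ t ∈ Icc (0:ℝ) T, c ≤ deriv κ t) →
      (∀ t ∈ Icc (0:ℝ) T, |deriv κ t| + |deriv (deriv κ) t| ≤ C₀) →
      ∀ g : ℝ → EuclideanSpace ℝ (Fin n),
      ContDiff ℝ 1 g →
      (∀ t ∈ Icc (0:ℝ) T, ‖g t‖ + ‖deriv g t‖ ≤ C₀) →
      ∀ ε ∈ Ioc (0:ℝ) 1, ∀ t ∈ Icc (0:ℝ) T,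
        ‖∫ s in (0:ℝ)..t, Real.sin ((κ t - κ s) / Real.sqrt ε) • g s‖
          ≤ C * Real.sqrt ε ∧
        ‖∫ s in (0:ℝ)..t, Real.cos ((κ t - κ s) / Real.sqrt ε) • g s‖
          ≤ C * Real.sqrt ε :=
  oscillatory_integral_bound_general T hT n c C₀ hc hC₀

end
end

section
/- Let ε ∈ (0,1], s ∈ [0,t_f], B > 0, and let γ_+, γ_− : [s,t_f] → ℂ be C¹ functions satisfying γ_+'(t) = (k'(t)/(2k(t)))·e^{−2i·κ(t)/ε^{1/2}}·γ_−(t) and γ_−'(t) = (k'(t)/(2k(t)))·e^{2i·κ(t)/ε^{1/2}}·γ_+(t), together with the bounds |γ_+(t)| ≤ B and |γ_−(t)| ≤ B for all t ∈ [s,t_f]. Then there exists C > 0 depending only on c, C₀, t_f (and not on ε, s, B) such that for all t ∈ [s,t_f]: |γ_+(t) − γ_+(s)| ≤ C·ε^{1/2}·B and |γ_−(t) − γ_−(s)| ≤ C·ε^{1/2}·B. -/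
/-! Integration by parts against the fast phase. With `φ = exp (i ω κ)` and `ω = ∓2/√ε` we
have `φ' = i ω k φ`, so the coupling term `(k'/2k) φ γ∓` equals `(k'/k²) φ' γ∓ / (2 i ω)`.
Subtracting the boundary term `(k'/k²) φ γ∓ / (2 i ω)` from `γ±` leaves a derivative in which `φ`
is no longer differentiated: it involves only `k''`, `k'` and `γ∓'`, and like the boundary term it
is `O(B / |ω|)`. Since `1 / |ω| = √ε / 2`, the amplitudes move by `O(√ε B)` over `[s, t_f]`. -/

open Set Complex

theorem norm_sub_le_of_norm_deriv_sub_le {E : Type*} [NormedAddCommGroup E] [NormedSpace ℝ E]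
    {a u a' u' : ℝ → E} {s t M : ℝ} (hst : s ≤ t)
    (ha : ∀ x ∈ Icc s t, HasDerivAt a (a' x) x) (hu : ∀ x ∈ Icc s t, HasDerivAt u (u' x) x)
    (hM : ∀ x ∈ Ico s t, ‖a' x - u' x‖ ≤ M) :
    ‖a t - a s‖ ≤ ‖u t‖ + ‖u s‖ + M * (t - s) := by
  have hmvt : ‖(a t - u t) - (a s - u s)‖ ≤ M * (t - s) :=
    norm_image_sub_le_of_norm_deriv_le_segment'
      (fun x hx => ((ha x hx).sub (hu x hx)).hasDerivWithinAt) hM t ⟨hst, le_rfl⟩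
  calc ‖a t - a s‖ = ‖((a t - u t) - (a s - u s)) + u t - u s‖ := by congr 1; abel
    _ ≤ ‖(a t - u t) - (a s - u s)‖ + ‖u t‖ + ‖u s‖ :=
      norm_sub_le_of_le (norm_add_le _ _) le_rfl
    _ ≤ ‖u t‖ + ‖u s‖ + M * (t - s) := by linarith

theorem HasDerivAt.div_sq {f f' : ℝ → ℝ} {d d' t : ℝ} (hf : HasDerivAt f d t)
    (hf' : HasDerivAt f' d' t) (h0 : f t ≠ 0) :
    HasDerivAt (fun x => f' x / f x ^ 2) ((d' * f t - 2 * f' t * d) / f t ^ 3) t := by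
  refine (hf'.fun_div (hf.fun_pow 2) (pow_ne_zero 2 h0)).congr_deriv ?_
  field_simp
  ring

theorem HasDerivAt.cexp_I_mul_ofReal {θ : ℝ → ℝ} {θ' t : ℝ} (h : HasDerivAt θ θ' t) :
    HasDerivAt (fun x => cexp (I * θ x)) (I * θ' * cexp (I * θ t)) t := by
  convert (h.ofReal_comp.const_mul I).cexp using 1
  ring

theorem norm_exp_neg_I_mul_ofReal (θ : ℝ) : ‖cexp (-(I * θ))‖ = 1 := by
  rw [← norm_exp_I_mul_ofReal (-θ)]
  push_cast
  ring_nf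

theorem abs_div_two_mul_le {c C x y : ℝ} (hc : 0 < c) (hx : c ≤ x) (hy : |y| ≤ C) :
    |y / (2 * x)| ≤ C / (2 * c) := by
  rw [abs_div, abs_of_pos (by linarith : 0 < 2 * x)]
  exact div_le_div₀ ((abs_nonneg y).trans hy) hy (by positivity) (by linarith)

theorem abs_div_sq_le {c C x y : ℝ} (hc : 0 < c) (hx : c ≤ x) (hy : |y| ≤ C) :
    |y / x ^ 2| ≤ C / c ^ 2 := by
  have hx0 : 0 < x := hc.trans_le hx
  rw [abs_div, abs_of_pos (by positivity : 0 < x ^ 2)]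
  exact div_le_div₀ ((abs_nonneg y).trans hy) hy (by positivity) (by gcongr)

theorem abs_mul_sub_two_mul_div_cube_le {c C x y z : ℝ} (hc : 0 < c) (hx : c ≤ x)
    (hxC : |x| ≤ C) (hy : |y| ≤ C) (hz : |z| ≤ C) :
    |(z * x - 2 * y * y) / x ^ 3| ≤ 3 * C ^ 2 / c ^ 3 := by
  have hC : 0 ≤ C := (abs_nonneg x).trans hxC
  have hnum : |z * x - 2 * y * y| ≤ 3 * C ^ 2 :=
    calc |z * x - 2 * y * y| ≤ |z| * |x| + 2 * (|y| * |y|) := by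
          refine (abs_sub _ _).trans ?_
          rw [abs_mul, abs_mul, abs_mul, abs_two, mul_assoc]
      _ ≤ C * C + 2 * (C * C) := by gcongr
      _ = 3 * C ^ 2 := by ring
  have hx0 : 0 < x := hc.trans_le hx
  rw [abs_div, abs_of_pos (by positivity : 0 < x ^ 3)]
  exact div_le_div₀ (by positivity) hnum (by positivity) (by gcongr)

theorem hasDerivAt_oscillatory_corrector {k k' k'' K : ℝ → ℝ} {b : ℝ → ℂ} {β : ℂ} {ω x : ℝ}
    (hω : ω ≠ 0) (hK : HasDerivAt K (k x) x) (hk : HasDerivAt k (k' x) x)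
    (hk' : HasDerivAt k' (k'' x) x) (hk0 : k x ≠ 0) (hb : HasDerivAt b β x) :
    HasDerivAt (fun y => ↑(k' y / k y ^ 2) * cexp (I * ↑(ω * K y)) * b y / (2 * I * ω))
      (↑(k' x / (2 * k x)) * cexp (I * ↑(ω * K x)) * b x
        + ((((k'' x * k x - 2 * k' x * k' x) / k x ^ 3 : ℝ) : ℂ) * cexp (I * ↑(ω * K x)) * b x
          + ↑(k' x / k x ^ 2) * cexp (I * ↑(ω * K x)) * β) / (2 * I * ω)) x := by
  have hφ := (hK.const_mul ω).cexp_I_mul_ofReal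
  have hg := (hk.div_sq hk' hk0).ofReal_comp
  refine (((hg.fun_mul hφ).fun_mul hb).div_const _).congr_deriv ?_
  have hkx : (k x : ℂ) ≠ 0 := by exact_mod_cast hk0
  have hωC : (ω : ℂ) ≠ 0 := by exact_mod_cast hω
  push_cast
  field_simp
  ring

theorem norm_boundary_term_le {c C₀ B κ κ' : ℝ} {φ β : ℂ} (hc : 0 < c) (hκ : c ≤ κ)
    (hκ' : |κ'| ≤ C₀) (hφ : ‖φ‖ = 1) (hβ : ‖β‖ ≤ B) :
    ‖↑(κ' / κ ^ 2) * φ * β‖ ≤ C₀ / c ^ 2 * B := by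
  rw [norm_mul, norm_mul, hφ, mul_one, norm_real, Real.norm_eq_abs]
  exact mul_le_mul (abs_div_sq_le hc hκ hκ') hβ (norm_nonneg _)
    (div_nonneg ((abs_nonneg _).trans hκ') (sq_nonneg c))

theorem norm_remainder_term_le {c C₀ B κ κ' κ'' : ℝ} {φ ψ α β : ℂ} (hc : 0 < c) (hκ : c ≤ κ)
    (hC₀ : |κ| + |κ'| + |κ''| ≤ C₀) (hφ : ‖φ‖ = 1) (hψ : ‖ψ‖ = 1) (hα : ‖α‖ ≤ B)
    (hβ : ‖β‖ ≤ B) :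
    ‖(((κ'' * κ - 2 * κ' * κ') / κ ^ 3 : ℝ) : ℂ) * φ * β
        + ↑(κ' / κ ^ 2) * φ * (↑(κ' / (2 * κ)) * ψ * α)‖
      ≤ 7 * C₀ ^ 2 / (2 * c ^ 3) * B := by
  have hκ_le : |κ| ≤ C₀ := by linarith [abs_nonneg κ', abs_nonneg κ'']
  have hκ'_le : |κ'| ≤ C₀ := by linarith [abs_nonneg κ, abs_nonneg κ'']
  have hκ''_le : |κ''| ≤ C₀ := by linarith [abs_nonneg κ, abs_nonneg κ']
  have hB : 0 ≤ B := (norm_nonneg _).trans hα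
  have hC₀ : 0 ≤ C₀ := (abs_nonneg _).trans hκ_le
  calc _ ≤ |(κ'' * κ - 2 * κ' * κ') / κ ^ 3| * ‖β‖ + |κ' / κ ^ 2| * (|κ' / (2 * κ)| * ‖α‖) := by
        refine (norm_add_le _ _).trans_eq ?_
        simp only [norm_mul, hφ, hψ, mul_one, norm_real, Real.norm_eq_abs]
    _ ≤ 3 * C₀ ^ 2 / c ^ 3 * B + C₀ / c ^ 2 * (C₀ / (2 * c) * B) := by
        gcongr
        exacts [abs_mul_sub_two_mul_div_cube_le hc hκ hκ_le hκ'_le hκ''_le,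
          abs_div_sq_le hc hκ hκ'_le, abs_div_two_mul_le hc hκ hκ'_le]
    _ = 7 * C₀ ^ 2 / (2 * c ^ 3) * B := by ring

theorem norm_sub_le_of_oscillatory_coupling {k k' k'' K : ℝ → ℝ} {a b : ℝ → ℂ}
    {c C₀ ω B s t : ℝ} (hc : 0 < c) (hω : ω ≠ 0) (hst : s ≤ t)
    (hK : ∀ x ∈ Icc s t, HasDerivAt K (k x) x)
    (hk : ∀ x ∈ Icc s t, HasDerivAt k (k' x) x)
    (hk' : ∀ x ∈ Icc s t, HasDerivAt k' (k'' x) x)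
    (hkc : ∀ x ∈ Icc s t, c ≤ k x)
    (hkC : ∀ x ∈ Icc s t, |k x| + |k' x| + |k'' x| ≤ C₀)
    (ha : ∀ x ∈ Icc s t, HasDerivAt a (↑(k' x / (2 * k x)) * cexp (I * ↑(ω * K x)) * b x) x)
    (hb : ∀ x ∈ Icc s t,
      HasDerivAt b (↑(k' x / (2 * k x)) * cexp (-(I * ↑(ω * K x))) * a x) x)
    (hab : ∀ x ∈ Icc s t, ‖a x‖ ≤ B ∧ ‖b x‖ ≤ B) :
    ‖a t - a s‖ ≤ (C₀ / c ^ 2 + 7 * C₀ ^ 2 / (4 * c ^ 3) * (t - s)) * B / |ω| := by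
  have hρ (z : ℂ) : ‖z / (2 * I * ω)‖ = ‖z‖ / (2 * |ω|) := by simp
  have hu x (hx : x ∈ Icc s t) := hasDerivAt_oscillatory_corrector hω (hK x hx) (hk x hx)
    (hk' x hx) (hc.trans_le (hkc x hx)).ne' (hb x hx)
  have hboundary x (hx : x ∈ Icc s t) :
      ‖↑(k' x / k x ^ 2) * cexp (I * ↑(ω * K x)) * b x‖ ≤ C₀ / c ^ 2 * B :=
    norm_boundary_term_le hc (hkc x hx)
      (by linarith [hkC x hx, abs_nonneg (k x), abs_nonneg (k'' x)])
      (norm_exp_I_mul_ofReal (ω * K x)) (hab x hx).2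
  calc ‖a t - a s‖
      ≤ C₀ / c ^ 2 * B / (2 * |ω|) + C₀ / c ^ 2 * B / (2 * |ω|)
          + 7 * C₀ ^ 2 / (2 * c ^ 3) * B / (2 * |ω|) * (t - s) := by
        refine (norm_sub_le_of_norm_deriv_sub_le (M := 7 * C₀ ^ 2 / (2 * c ^ 3) * B / (2 * |ω|))
          hst ha hu fun x hx => ?_).trans ?_
        · have hx' := Ico_subset_Icc_self hx
          rw [sub_add_cancel_left, norm_neg, hρ]
          gcongr
          exact norm_remainder_term_le hc (hkc x hx') (hkC x hx') (norm_exp_I_mul_ofReal _)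
            (norm_exp_neg_I_mul_ofReal _) (hab x hx').1 (hab x hx').2
        · simp only [hρ]
          gcongr
          exacts [hboundary t ⟨hst, le_rfl⟩, hboundary s ⟨le_rfl, hst⟩]
    _ = (C₀ / c ^ 2 + 7 * C₀ ^ 2 / (4 * c ^ 3) * (t - s)) * B / |ω| := by
        field_simp
        ring

theorem wkb_amplitudes_near_conservation
    (tf : ℝ) (htf : 0 < tf)
    (c C₀ : ℝ) (hc : 0 < c) (hC₀ : 0 < C₀) :
    -- the constant C depends only on c, C₀, t_f (and not on ε, s, B)
    ∃ C > 0, ∀ k : ℝ → ℝ,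
      ContDiff ℝ 2 k →
      (∀ t ∈ Icc (0:ℝ) tf, c ≤ k t) →
      (∀ t ∈ Icc (0:ℝ) tf,
        |k t| + |deriv k t| + |deriv (deriv k) t| ≤ C₀) →
      ∀ ε ∈ Ioc (0:ℝ) 1, ∀ s ∈ Icc (0:ℝ) tf, ∀ B : ℝ, 0 < B →
      ∀ γp γm : ℝ → ℂ,
      (∀ t ∈ Icc s tf, HasDerivAt γp
        ((↑(deriv k t / (2 * k t)) : ℂ)
          * Complex.exp (-(2 * Complex.I * ↑(∫ τ in (0:ℝ)..t, k τ))
              / (↑(Real.sqrt ε) : ℂ))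
          * γm t) t) →
      (∀ t ∈ Icc s tf, HasDerivAt γm
        ((↑(deriv k t / (2 * k t)) : ℂ)
          * Complex.exp ((2 * Complex.I * ↑(∫ τ in (0:ℝ)..t, k τ))
              / (↑(Real.sqrt ε) : ℂ))
          * γp t) t) →
      (∀ t ∈ Icc s tf, ‖γp t‖ ≤ B ∧ ‖γm t‖ ≤ B) →
      ∀ t ∈ Icc s tf,
        ‖γp t - γp s‖ ≤ C * Real.sqrt ε * B ∧
        ‖γm t - γm s‖ ≤ C * Real.sqrt ε * B := by
  refine ⟨(C₀ / c ^ 2 + 7 * C₀ ^ 2 / (4 * c ^ 3) * tf) / 2, by positivity, ?_⟩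
  intro k hk hkc hkb ε hε s hs B hB γp γm hγp hγm hbd t ht
  have hst : Icc s t ⊆ Icc s tf := Icc_subset_Icc_right ht.2
  have h0t : Icc s t ⊆ Icc 0 tf := Icc_subset_Icc hs.1 ht.2
  have hsqrt : 0 < √ε := Real.sqrt_pos.mpr hε.1
  have hK x : HasDerivAt (fun y => ∫ τ in (0:ℝ)..y, k τ) (k x) x :=
    (hk.continuous.integral_hasStrictDerivAt 0 x).hasDerivAt
  have hk' x : HasDerivAt k (deriv k x) x := (hk.differentiable two_ne_zero x).hasDerivAt
  have hk'' x : HasDerivAt (deriv k) (deriv (deriv k) x) x :=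
    (hk.differentiable_deriv_two x).hasDerivAt
  have hconst {ω : ℝ} (hω : |ω| = 2 / √ε) :
      (C₀ / c ^ 2 + 7 * C₀ ^ 2 / (4 * c ^ 3) * (t - s)) * B / |ω|
        ≤ (C₀ / c ^ 2 + 7 * C₀ ^ 2 / (4 * c ^ 3) * tf) / 2 * √ε * B := by
    rw [hω]
    field_simp
    gcongr
    linarith [hs.1, ht.2]
  have hγ_le {ω : ℝ} (hω : |ω| = 2 / √ε) {a b : ℝ → ℂ} ha hb hab :=
    (norm_sub_le_of_oscillatory_coupling (a := a) (b := b) hc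
      (abs_ne_zero.mp (hω ▸ (div_pos two_pos hsqrt).ne')) ht.1 (fun x _ => hK x)
      (fun x _ => hk' x) (fun x _ => hk'' x) (fun x hx => hkc x (h0t hx))
      (fun x hx => hkb x (h0t hx)) ha hb hab).trans (hconst hω)
  have hω_neg : |-2 / √ε| = 2 / √ε := by rw [neg_div, abs_neg, abs_of_pos (by positivity)]
  have hω_pos : |2 / √ε| = 2 / √ε := abs_of_pos (by positivity)
  refine ⟨hγ_le hω_neg (fun x hx => ?_) (fun x hx => ?_) (fun x hx => hbd x (hst hx)),
    hγ_le hω_pos (fun x hx => ?_) (fun x hx => ?_) (fun x hx => (hbd x (hst hx)).symm)⟩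
  · convert hγp x (hst hx) using 4; push_cast; ring
  · convert hγm x (hst hx) using 4; push_cast; ring
  · convert hγm x (hst hx) using 4; push_cast; ring
  · convert hγp x (hst hx) using 4; push_cast; ring
end
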